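/- arXiv:2404.01983 — 2 statements merged into one kernel-verified Lean document; each statement's English description precedes it below -/
import Mathlib

section
/- Diagonal vanishing step in the permeability symmetry proof: under the hypotheses of the cell-problem symmetry lemma, if R is the reflection with R e_j = −e_j and R e_i = e_i for i ≠ j, then R w_j(R·) = −w_j, and therefore K_{ij} = ∫_{Y*} w_j · e_i dy = −∫_{Y*} w_j · (R e_i) dy = −K_{ij} for i ≠ j, whence K_{ij} = 0 for all i ≠ j. -/
open Matrix MeasureTheory
open scoped BigOperators

noncomputable section

/-- The perforated unit cell `Y* = (−1/2,1/2)^n \ cl(B_r(0))`. -/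
def Ystar (n : ℕ) (r : ℝ) : Set (EuclideanSpace ℝ (Fin n)) :=
  {y | ∀ i, |y i| < 1/2} \ Metric.closedBall 0 r

/-- Partial derivative in direction `j`. -/
def pd {n : ℕ} (j : Fin n) (f : EuclideanSpace ℝ (Fin n) → ℝ)
    (y : EuclideanSpace ℝ (Fin n)) : ℝ :=
  fderiv ℝ f y (EuclideanSpace.single j 1)

/-- Strong form of the periodic Stokes cell problem on `Y*` with right-hand side `e`:
`−Δ w + ∇π = e`, `∇·w = 0` in `Y*`, `w = 0` on `∂B_r(0)`, `w, π` `Y`-periodic. -/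
def IsCellSolution (n : ℕ) (r : ℝ) (e : Fin n → ℝ)
    (w : EuclideanSpace ℝ (Fin n) → EuclideanSpace ℝ (Fin n))
    (π : EuclideanSpace ℝ (Fin n) → ℝ) : Prop :=
  ContDiffOn ℝ 2 w (Ystar n r) ∧ ContDiffOn ℝ 1 π (Ystar n r) ∧
  (∀ (y : EuclideanSpace ℝ (Fin n)) (k : Fin n → ℤ),
      w (y + (WithLp.equiv 2 (Fin n → ℝ)).symm (fun i => (k i : ℝ))) = w y) ∧
  (∀ (y : EuclideanSpace ℝ (Fin n)) (k : Fin n → ℤ),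
      π (y + (WithLp.equiv 2 (Fin n → ℝ)).symm (fun i => (k i : ℝ))) = π y) ∧
  (∀ y ∈ Metric.sphere (0 : EuclideanSpace ℝ (Fin n)) r, w y = 0) ∧
  (∀ y ∈ Ystar n r, ∀ i,
      -(∑ j, pd j (fun z => pd j (fun u => w u i) z) y) + pd i π y = e i) ∧
  (∀ y ∈ Ystar n r, ∑ i, pd i (fun u => w u i) y = 0)

/-- The action of a matrix on points of the cell. -/
def act {n : ℕ} (Rm : Matrix (Fin n) (Fin n) ℝ)
    (y : EuclideanSpace ℝ (Fin n)) : EuclideanSpace ℝ (Fin n) :=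
  WithLp.toLp 2 (fun i => ∑ j, Rm i j * y j)


set_option linter.unnecessarySeqFocus false
set_option linter.unusedVariables false

namespace Stmt9Aux

variable {n : ℕ}

abbrev E (n : ℕ) := EuclideanSpace ℝ (Fin n)

def σe (j : Fin n) : E n ≃ₗᵢ[ℝ] E n :=
  LinearIsometryEquiv.piLpCongrRight 2 (fun l => if l = j then .neg ℝ else .refl ℝ ℝ)

def d (j l : Fin n) : ℝ := if l = j then -1 else 1

lemma σe_apply (j : Fin n) (y : E n) (l : Fin n) : σe j y l = d j l * y l := by
  simp only [σe, LinearIsometryEquiv.piLpCongrRight_apply, WithLp.equiv_symm_apply, PiLp.toLp_apply, d]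
  split <;> simp

lemma d_sq (j l : Fin n) : d j l * d j l = 1 := by
  unfold d; split <;> norm_num

lemma σe_invol (j : Fin n) (y : E n) : σe j (σe j y) = y := by
  ext l; rw [σe_apply, σe_apply]
  unfold d; split <;> ring

lemma σe_single (j k : Fin n) : σe j (EuclideanSpace.single k 1) = d j k • EuclideanSpace.single k 1 := by
  ext l
  rw [σe_apply]
  simp only [PiLp.smul_apply, EuclideanSpace.single_apply, smul_eq_mul]
  unfold d
  by_cases hlk : l = k <;> by_cases hlj : l = j <;> simp [hlk, hlj] <;> aesop

lemma σe_mem_Ystar {r : ℝ} (j : Fin n) {y : E n} (hy : y ∈ Ystar n r) : σe j y ∈ Ystar n r := by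
  obtain ⟨h1, h2⟩ := hy
  constructor
  · intro i
    rw [σe_apply]
    unfold d; split <;> simpa using h1 i
  · intro hball
    apply h2
    simp only [Metric.mem_closedBall, dist_zero_right] at hball ⊢
    calc ‖y‖ = ‖σe j y‖ := ((σe j).norm_map y).symm
    _ ≤ r := hball

lemma σe_preimage_Ystar {r : ℝ} (j : Fin n) : (σe j) ⁻¹' (Ystar n r) = Ystar n r := by
  ext y
  constructor
  · intro h
    have := σe_mem_Ystar (r := r) j h
    rwa [σe_invol] at this
  · exact fun h => σe_mem_Ystar j h

lemma isOpen_Ystar (n : ℕ) (r : ℝ) : IsOpen (Ystar n r) := by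
  apply IsOpen.sdiff _ Metric.isClosed_closedBall
  have : {y : E n | ∀ i, |y i| < 1/2} = ⋂ i, {y : E n | |y i| < 1/2} := by
    ext y; simp
  rw [this]
  apply isOpen_iInter_of_finite
  intro i
  have hc : Continuous fun y : E n => |y i| :=
    (continuous_apply i).comp (PiLp.continuous_ofLp 2 _) |>.abs
  exact isOpen_lt hc continuous_const

lemma pd_comp (j k : Fin n) (f : E n → ℝ) (y : E n)
    (hf : DifferentiableAt ℝ f (σe j y)) :
    pd k (fun z => f (σe j z)) y = d j k * pd k f (σe j y) := by
  have hiso := (σe j).toContinuousLinearEquiv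
  have hc : (fun z => f (σe j z)) = f ∘ (σe j).toContinuousLinearEquiv := rfl
  unfold pd
  rw [hc, ContinuousLinearEquiv.comp_right_fderiv]
  have he : ((σe j).toContinuousLinearEquiv : E n →L[ℝ] E n) (EuclideanSpace.single k 1)
      = d j k • EuclideanSpace.single k 1 := σe_single j k
  show (fderiv ℝ f ((σe j).toContinuousLinearEquiv y)) (((σe j).toContinuousLinearEquiv : E n →L[ℝ] E n) (EuclideanSpace.single k 1)) = _
  rw [he]
  rw [_root_.map_smul]
  rfl

end Stmt9Aux

namespace Stmt9Aux

lemma pd_const_mul (k : Fin n) (c : ℝ) (h : E n → ℝ) (y : E n)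
    (hh : DifferentiableAt ℝ h y) :
    pd k (fun z => c * h z) y = c * pd k h y := by
  unfold pd
  rw [fderiv_const_mul hh]
  simp

lemma pd2_comp (r : ℝ) (j k : Fin n) (f : E n → ℝ) {y : E n} (hy : y ∈ Ystar n r)
    (hf : ContDiffOn ℝ 2 f (Ystar n r)) :
    pd k (fun z => pd k (fun u => f (σe j u)) z) y
      = pd k (fun z => pd k f z) (σe j y) := by
  have hopen := isOpen_Ystar n r
  have hσy : σe j y ∈ Ystar n r := σe_mem_Ystar j hy
  set g : E n → ℝ := fun z => pd k f z with hg
  have hgdiff : DifferentiableAt ℝ g (σe j y) := by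
    have h2 : ContDiffAt ℝ 2 f (σe j y) := hf.contDiffAt (hopen.mem_nhds hσy)
    have h1 : ContDiffAt ℝ 1 (fderiv ℝ f) (σe j y) := h2.fderiv_right (by norm_num)
    exact (h1.differentiableAt one_ne_zero).clm_apply (differentiableAt_const _)
  have heq : (fun z => pd k (fun u => f (σe j u)) z) =ᶠ[nhds y]
      (fun z => d j k * g (σe j z)) := by
    filter_upwards [hopen.mem_nhds hy] with z hz
    exact pd_comp j k f z
      (((hf.contDiffAt (hopen.mem_nhds (σe_mem_Ystar j hz))).differentiableAt (by norm_num)))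
  have h1 : pd k (fun z => pd k (fun u => f (σe j u)) z) y
      = pd k (fun z => d j k * g (σe j z)) y :=
    congrArg (fun L : E n →L[ℝ] ℝ => L (EuclideanSpace.single k 1)) heq.fderiv_eq
  rw [h1]
  have hgc : DifferentiableAt ℝ (fun z => g (σe j z)) y :=
    hgdiff.comp y ((σe j).toContinuousLinearEquiv.differentiableAt)
  rw [pd_const_mul k _ _ y hgc, pd_comp j k g y hgdiff, ← mul_assoc, d_sq, one_mul]

end Stmt9Aux

namespace Stmt9Aux

lemma σe_lattice (j : Fin n) (k : Fin n → ℤ) :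
    σe j ((WithLp.equiv 2 (Fin n → ℝ)).symm (fun i => (k i : ℝ)))
      = (WithLp.equiv 2 (Fin n → ℝ)).symm
          (fun i => (((if i = j then -k i else k i : ℤ)) : ℝ)) := by
  ext l
  rw [σe_apply]
  simp only [WithLp.equiv_symm_apply, PiLp.toLp_apply, d]
  split <;> simp

lemma act_eq (j : Fin n) (Rm : Matrix (Fin n) (Fin n) ℝ)
    (hRm : Rm = Matrix.diagonal (fun l => if l = j then (-1 : ℝ) else 1)) (y : E n) :
    act Rm y = σe j y := by
  ext l
  simp only [act, hRm, Matrix.diagonal_apply, σe_apply, d, ite_mul, zero_mul]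
  rw [Finset.sum_ite_eq]
  simp

lemma pd2_const_mul (r : ℝ) (k : Fin n) (c : ℝ) (F : E n → ℝ) {z : E n} (hz : z ∈ Ystar n r)
    (hF : ContDiffOn ℝ 2 F (Ystar n r)) :
    pd k (fun u => pd k (fun v => c * F v) u) z = c * pd k (fun u => pd k F u) z := by
  have hopen := isOpen_Ystar n r
  have heq : (fun u => pd k (fun v => c * F v) u) =ᶠ[nhds z] (fun u => c * pd k F u) := by
    filter_upwards [hopen.mem_nhds hz] with u hu
    exact pd_const_mul k c F u ((hF.contDiffAt (hopen.mem_nhds hu)).differentiableAt (by norm_num))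
  have h1 : pd k (fun u => pd k (fun v => c * F v) u) z = pd k (fun u => c * pd k F u) z :=
    congrArg (fun L : E n →L[ℝ] ℝ => L (EuclideanSpace.single k 1)) heq.fderiv_eq
  rw [h1]
  have hgdiff : DifferentiableAt ℝ (fun u => pd k F u) z := by
    have h2 : ContDiffAt ℝ 2 F z := hF.contDiffAt (hopen.mem_nhds hz)
    have h1' : ContDiffAt ℝ 1 (fderiv ℝ F) z := h2.fderiv_right (by norm_num)
    exact (h1'.differentiableAt one_ne_zero).clm_apply (differentiableAt_const _)
  exact pd_const_mul k c _ z hgdiff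

lemma reflected_solution (r : ℝ) (j : Fin n)
    (w : E n → E n) (π : E n → ℝ)
    (hsol : IsCellSolution n r (Pi.single j 1) w π) :
    IsCellSolution n r (Pi.single j 1)
      (fun y => -(σe j (w (σe j y)))) (fun y => -(π (σe j y))) := by
  obtain ⟨hw, hπ, hwper, hπper, hbd, hpde, hdiv⟩ := hsol
  have hopen := isOpen_Ystar n r
  have hmaps : Set.MapsTo (σe j) (Ystar n r) (Ystar n r) := fun y hy => σe_mem_Ystar j hy
  have σcd : ContDiff ℝ 2 (fun y : E n => σe j y) :=
    ((σe j).toContinuousLinearEquiv : E n →L[ℝ] E n).contDiff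
  have hwσ : ContDiffOn ℝ 2 (fun y => w (σe j y)) (Ystar n r) :=
    hw.comp (σcd.contDiffOn) hmaps
  refine ⟨?_, ?_, ?_, ?_, ?_, ?_, ?_⟩
  · -- smoothness of w'
    have : ContDiff ℝ 2 (fun v : E n => -(σe j v)) := σcd.neg
    exact this.comp_contDiffOn hwσ
  · -- smoothness of π'
    have σcd1 : ContDiff ℝ 1 (fun y : E n => σe j y) :=
      ((σe j).toContinuousLinearEquiv : E n →L[ℝ] E n).contDiff
    exact (hπ.comp (σcd1.contDiffOn) hmaps).neg
  · -- periodicity of w'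
    intro y k
    have : σe j (y + (WithLp.equiv 2 (Fin n → ℝ)).symm (fun i => (k i : ℝ)))
        = σe j y + (WithLp.equiv 2 (Fin n → ℝ)).symm
            (fun i => (((if i = j then -k i else k i : ℤ)) : ℝ)) := by
      rw [map_add, σe_lattice]
    simp only [this, hwper]
  · -- periodicity of π'
    intro y k
    have : σe j (y + (WithLp.equiv 2 (Fin n → ℝ)).symm (fun i => (k i : ℝ)))
        = σe j y + (WithLp.equiv 2 (Fin n → ℝ)).symm
            (fun i => (((if i = j then -k i else k i : ℤ)) : ℝ)) := by
      rw [map_add, σe_lattice]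
    simp only [this, hπper]
  · -- boundary
    intro y hy
    have : σe j y ∈ Metric.sphere (0 : E n) r := by
      simp only [mem_sphere_iff_norm, sub_zero] at hy ⊢
      rw [(σe j).norm_map]; exact hy
    show -(σe j (w (σe j y))) = 0
    rw [hbd _ this, map_zero, neg_zero]
  · -- PDE
    intro y hy i'
    have hσy := σe_mem_Ystar j hy
    set c : ℝ := -(d j i') with hc
    have hFcd : ContDiffOn ℝ 2 (fun v => w v i') (Ystar n r) :=
      (EuclideanSpace.proj i' : E n →L[ℝ] ℝ).contDiff.comp_contDiffOn hw
    have hcomp : (fun u : E n => (-(σe j (w (σe j u)))) i') = fun u => (fun v => c * w v i') (σe j u) := by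
      funext u
      simp only [PiLp.neg_apply, σe_apply, hc]
      ring
    have hcF : ContDiffOn ℝ 2 (fun v => c * w v i') (Ystar n r) := contDiffOn_const.mul hFcd
    have hlap : ∀ k, pd k (fun z => pd k (fun u => (-(σe j (w (σe j u)))) i') z) y
        = c * pd k (fun z => pd k (fun v => w v i') z) (σe j y) := by
      intro k
      rw [hcomp, pd2_comp r j k _ hy hcF, pd2_const_mul r k c _ hσy hFcd]
    have hπ' : pd i' (fun u => -(π (σe j u))) y = c * pd i' π (σe j y) := by
      have hdiffπ : DifferentiableAt ℝ (fun v => (-1 : ℝ) * π v) (σe j y) :=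
        (contDiffOn_const.mul hπ |>.contDiffAt (hopen.mem_nhds hσy)).differentiableAt (by norm_num)
      have h1 := pd_comp j i' (fun v => (-1 : ℝ) * π v) y hdiffπ
      have h2 : pd i' (fun u => -(π (σe j u))) y
          = pd i' (fun z => (fun v => (-1 : ℝ) * π v) (σe j z)) y := by
        congr 1; funext u; ring
      rw [h2, h1, pd_const_mul i' (-1) π (σe j y)
          ((hπ.contDiffAt (hopen.mem_nhds hσy)).differentiableAt (by norm_num)), hc]
      ring
    calc -(∑ k, pd k (fun z => pd k (fun u => (-(σe j (w (σe j u)))) i') z) y)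
          + pd i' (fun u => -(π (σe j u))) y
        = c * (-(∑ k, pd k (fun z => pd k (fun v => w v i') z) (σe j y)) + pd i' π (σe j y)) := by
          simp only [hlap, hπ', ← Finset.mul_sum]; ring
      _ = c * (Pi.single j (1:ℝ) : Fin n → ℝ) i' := by rw [hpde _ hσy i']
      _ = (Pi.single j (1:ℝ) : Fin n → ℝ) i' := by
          rcases eq_or_ne i' j with h | h
          · subst h; simp [hc, d]
          · simp [Pi.single_apply, h, hc, d]
  · -- divergence
    intro y hy
    have hσy := σe_mem_Ystar j hy
    have hterm : ∀ i', pd i' (fun u => (-(σe j (w (σe j u)))) i') y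
        = -(pd i' (fun v => w v i') (σe j y)) := by
      intro i'
      have hFcd : ContDiffOn ℝ 2 (fun v => w v i') (Ystar n r) :=
        (EuclideanSpace.proj i' : E n →L[ℝ] ℝ).contDiff.comp_contDiffOn hw
      have hcomp : (fun u : E n => (-(σe j (w (σe j u)))) i')
          = fun u => (fun v => -(d j i') * w v i') (σe j u) := by
        funext u
        simp only [PiLp.neg_apply, σe_apply]
        ring
      have hdiff : DifferentiableAt ℝ (fun v => -(d j i') * w v i') (σe j y) :=
        ((contDiffOn_const.mul hFcd).contDiffAt (hopen.mem_nhds hσy)).differentiableAt (by norm_num)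
      rw [hcomp, pd_comp j i' _ y hdiff, pd_const_mul i' _ _ _
        ((hFcd.contDiffAt (hopen.mem_nhds hσy)).differentiableAt (by norm_num))]
      linear_combination (-(pd i' (fun v => w v i') (σe j y))) * d_sq j i'
    simp only [hterm]
    rw [Finset.sum_neg_distrib, hdiv _ hσy, neg_zero]

end Stmt9Aux


open Stmt9Aux

/-- Off-diagonal vanishing of the permeability: with `R` the reflection
`R e_j = −e_j`, `R e_i = e_i (i ≠ j)`, one has `R w_j(R·) = −w_j` on `Y*`
and hence `K_{ij} = 0` for `i ≠ j`. -/
theorem stmt_9 {n : ℕ} (r : ℝ) (hr1 : 0 < r) (hr2 : r < 1/2)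
    (w : Fin n → EuclideanSpace ℝ (Fin n) → EuclideanSpace ℝ (Fin n))
    (π : Fin n → EuclideanSpace ℝ (Fin n) → ℝ)
    (hsol : ∀ j, IsCellSolution n r (Pi.single j 1) (w j) (π j))
    (huniq : ∀ (e : Fin n → ℝ) (w₁ w₂ : EuclideanSpace ℝ (Fin n) → EuclideanSpace ℝ (Fin n))
        (π₁ π₂ : EuclideanSpace ℝ (Fin n) → ℝ),
      IsCellSolution n r e w₁ π₁ → IsCellSolution n r e w₂ π₂ →
        ∀ y ∈ Ystar n r, w₁ y = w₂ y)
    (hint : ∀ i j, IntegrableOn (fun y => w j y i) (Ystar n r))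
    (K : Matrix (Fin n) (Fin n) ℝ)
    (hK : ∀ i j, K i j = ∫ y in Ystar n r, w j y i)
    (i j : Fin n) (hij : i ≠ j)
    (Rm : Matrix (Fin n) (Fin n) ℝ)
    (hRm : Rm = Matrix.diagonal (fun l => if l = j then (-1 : ℝ) else 1)) :
    (∀ y ∈ Ystar n r, act Rm (w j (act Rm y)) = - w j y) ∧ K i j = 0 := by
  have hrefl := reflected_solution r j (w j) (π j) (hsol j)
  have huq := huniq (Pi.single j 1) (w j) _ (π j) _ (hsol j) hrefl
  have hid : ∀ y ∈ Ystar n r, σe j (w j (σe j y)) = - w j y := by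
    intro y hy
    have := huq y hy
    rw [this]
    simp
  constructor
  · intro y hy
    rw [act_eq j Rm hRm, act_eq j Rm hRm, hid y hy]
  · have hmp := (σe j).measurePreserving
    have hemb : MeasurableEmbedding (σe j) := (σe j).toHomeomorph.measurableEmbedding
    have key : (∫ y in Ystar n r, w j y i) = -∫ y in Ystar n r, w j y i := by
      have h1 : (∫ y in Ystar n r, w j y i) = ∫ y in Ystar n r, -(w j (σe j y) i) := by
        apply setIntegral_congr_fun (isOpen_Ystar n r).measurableSet
        intro y hy
        have h2 := hid y hy
        have h3 : σe j (w j (σe j y)) i = - w j y i := by rw [h2]; rfl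
        rw [σe_apply] at h3
        have hd : d j i = 1 := by unfold d; simp [hij]
        rw [hd, one_mul] at h3
        show w j y i = -(w j (σe j y) i)
        rw [h3]; ring
      have h4 := hmp.setIntegral_preimage_emb hemb (fun y => w j y i) (Ystar n r)
      rw [σe_preimage_Ystar] at h4
      calc (∫ y in Ystar n r, w j y i) = ∫ y in Ystar n r, -(w j (σe j y) i) := h1
        _ = -∫ y in Ystar n r, w j (σe j y) i := integral_neg _
        _ = -∫ y in Ystar n r, w j y i := by rw [h4]
    have hKij := hK i j
    rw [hKij]
    linarith [key]
end
end

section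
/- Lipschitz dependence of saddle-point solutions on the data: in the setting of the abstract saddle-point problem, let α₀, β₀, H, M > 0 and for i = 1,2 let (a_i, b_i, f_i, g_i) satisfy ‖a_i‖_Bil ≤ H, a_i(v,v) ≥ α₀‖v‖², inf-sup constant of b_i ≥ β₀, ‖f_i‖_{V'} ≤ M, ‖g_i‖_{Q'} ≤ M, with corresponding solutions (v_i, p_i). Then there is a constant L = L(α₀, β₀, H) such that ‖v₁ − v₂‖_V + ‖p₁ − p₂‖_Q ≤ L ( M(‖a₁ − a₂‖_Bil + ‖b₁ − b₂‖_Bil) + ‖f₁ − f₂‖_{V'} + ‖g₁ − g₂‖_{Q'} ). -/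
private lemma sp_quad (α A B x D : ℝ) (hα : 0 < α)
    (hx : 0 ≤ x) (hD : 0 ≤ D) (h : α * x ^ 2 ≤ A * D * x + B * D ^ 2) :
    x ≤ Real.sqrt (2 * B / α + A ^ 2 / α ^ 2) * D := by
  have h2 : x ^ 2 ≤ (2 * B / α + A ^ 2 / α ^ 2) * D ^ 2 := by
    rw [div_add_div _ _ (ne_of_gt hα) (by positivity), div_mul_eq_mul_div,
      le_div_iff₀ (by positivity)]
    nlinarith [sq_nonneg (α * x - A * D), mul_le_mul_of_nonneg_left h (le_of_lt hα)]
  calc x = Real.sqrt (x ^ 2) := (Real.sqrt_sq hx).symm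
    _ ≤ Real.sqrt ((2 * B / α + A ^ 2 / α ^ 2) * D ^ 2) := Real.sqrt_le_sqrt h2
    _ = Real.sqrt (2 * B / α + A ^ 2 / α ^ 2) * D := by
        rw [Real.sqrt_mul' _ (by positivity), Real.sqrt_sq hD]

private lemma sp_apply_le {V : Type*} [NormedAddCommGroup V] [NormedSpace ℝ V]
    (f : V →L[ℝ] ℝ) (v : V) : f v ≤ ‖f‖ * ‖v‖ :=
  (le_abs_self _).trans ((Real.norm_eq_abs (f v)) ▸ f.le_opNorm v)

private lemma sp_abs_apply_le {V : Type*} [NormedAddCommGroup V] [NormedSpace ℝ V]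
    (f : V →L[ℝ] ℝ) (v : V) : |f v| ≤ ‖f‖ * ‖v‖ :=
  (Real.norm_eq_abs (f v)) ▸ f.le_opNorm v

private lemma sp_abs_apply₂_le {W V : Type*} [NormedAddCommGroup V] [NormedSpace ℝ V]
    [NormedAddCommGroup W] [NormedSpace ℝ W]
    (a : W →L[ℝ] V →L[ℝ] ℝ) (w : W) (v : V) : |a w v| ≤ ‖a‖ * ‖w‖ * ‖v‖ :=
  (Real.norm_eq_abs (a w v)) ▸ a.le_opNorm₂ w v

set_option maxHeartbeats 1000000 in
/-- Lipschitz dependence of saddle-point solutions on the data: there is a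
constant `L = L(α₀, β₀, H)` such that for all data bounded by `M` with
coercivity constant `α₀`, inf–sup constant `β₀` and `‖a_i‖ ≤ H`, the solutions
of the two saddle-point problems satisfy
`‖v₁ − v₂‖ + ‖p₁ − p₂‖ ≤ L (M(‖a₁ − a₂‖ + ‖b₁ − b₂‖) + ‖f₁ − f₂‖ + ‖g₁ − g₂‖)`. -/
theorem stmt_12 (V Q : Type*) [NormedAddCommGroup V] [NormedSpace ℝ V]
    [NormedAddCommGroup Q] [NormedSpace ℝ Q]
    [CompleteSpace V] [CompleteSpace Q]
    (α₀ β₀ H : ℝ) (hα : 0 < α₀) (hβ : 0 < β₀) (hH : 0 < H) :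
    ∃ L : ℝ, 0 < L ∧ ∀ M : ℝ, 0 < M →
      ∀ (a₁ a₂ : V →L[ℝ] V →L[ℝ] ℝ) (b₁ b₂ : Q →L[ℝ] V →L[ℝ] ℝ)
        (f₁ f₂ : V →L[ℝ] ℝ) (g₁ g₂ : Q →L[ℝ] ℝ) (v₁ v₂ : V) (p₁ p₂ : Q),
        ‖a₁‖ ≤ H → ‖a₂‖ ≤ H →
        (∀ v : V, α₀ * ‖v‖ ^ 2 ≤ a₁ v v) → (∀ v : V, α₀ * ‖v‖ ^ 2 ≤ a₂ v v) →
        (∀ q : Q, β₀ * ‖q‖ ≤ ‖b₁ q‖) → (∀ q : Q, β₀ * ‖q‖ ≤ ‖b₂ q‖) →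
        ‖f₁‖ ≤ M → ‖f₂‖ ≤ M → ‖g₁‖ ≤ M → ‖g₂‖ ≤ M →
        a₁ v₁ + b₁ p₁ = f₁ → (∀ q : Q, b₁ q v₁ = g₁ q) →
        a₂ v₂ + b₂ p₂ = f₂ → (∀ q : Q, b₂ q v₂ = g₂ q) →
        ‖v₁ - v₂‖ + ‖p₁ - p₂‖ ≤
          L * (M * (‖a₁ - a₂‖ + ‖b₁ - b₂‖) + ‖f₁ - f₂‖ + ‖g₁ - g₂‖) := by
  -- constants depending only on α₀, β₀, H
  set Cv : ℝ := Real.sqrt (2 * (1 / β₀) / α₀ + (1 + H / β₀) ^ 2 / α₀ ^ 2) with hCv_def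
  have hCv : 0 ≤ Cv := Real.sqrt_nonneg _
  set Cp : ℝ := (1 + H * Cv) / β₀ with hCp_def
  have hCp : 0 ≤ Cp := by positivity
  set C₁ : ℝ := max 1 (max Cv Cp) with hC₁_def
  have hC₁1 : (1 : ℝ) ≤ C₁ := le_max_left _ _
  have hC₁v : Cv ≤ C₁ := le_trans (le_max_left _ _) (le_max_right _ _)
  have hC₁p : Cp ≤ C₁ := le_trans (le_max_right _ _) (le_max_right _ _)
  have hC₁0 : 0 < C₁ := lt_of_lt_of_le one_pos hC₁1
  set A : ℝ := C₁ * (1 + H / β₀) with hA_def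
  set B : ℝ := C₁ ^ 2 / β₀ with hB_def
  set C₅ : ℝ := Real.sqrt (2 * B / α₀ + A ^ 2 / α₀ ^ 2) with hC₅_def
  have hC₅ : 0 ≤ C₅ := Real.sqrt_nonneg _
  clear_value Cv Cp C₁ A B C₅
  refine ⟨C₅ + (C₁ + H * C₅) / β₀, ?_, ?_⟩
  · have : 0 < (C₁ + H * C₅) / β₀ := div_pos (by nlinarith) hβ
    linarith
  intro M hM a₁ a₂ b₁ b₂ f₁ f₂ g₁ g₂ v₁ v₂ p₁ p₂ ha1H ha2H hc1 hc2 hb1 hb2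
    hf1 hf2 hg1 hg2 heq1 hq1 heq2 hq2
  -- stability bounds for (v₂, p₂)
  have hv2eq : a₂ v₂ v₂ = f₂ v₂ - g₂ p₂ := by
    have h := congrArg (fun F => F v₂) heq2
    simp only [ContinuousLinearMap.add_apply] at h
    rw [hq2 p₂] at h
    linarith
  have hp2b : ‖p₂‖ ≤ (M + H * ‖v₂‖) / β₀ := by
    have h1 := hb2 p₂
    have h2 : b₂ p₂ = f₂ - a₂ v₂ := eq_sub_of_add_eq' heq2
    have h3 : ‖b₂ p₂‖ ≤ M + H * ‖v₂‖ := by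
      rw [h2]
      calc ‖f₂ - a₂ v₂‖ ≤ ‖f₂‖ + ‖a₂ v₂‖ := norm_sub_le _ _
        _ ≤ M + H * ‖v₂‖ := by
            have := (a₂.le_opNorm v₂).trans
              (mul_le_mul_of_nonneg_right ha2H (norm_nonneg _))
            linarith
    rw [le_div_iff₀ hβ]
    linarith
  have hst : α₀ * ‖v₂‖ ^ 2 ≤ (1 + H / β₀) * M * ‖v₂‖ + (1 / β₀) * M ^ 2 := by
    have h1 := hc2 v₂
    rw [hv2eq] at h1
    have h2 : f₂ v₂ ≤ M * ‖v₂‖ :=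
      (sp_apply_le f₂ v₂).trans (mul_le_mul_of_nonneg_right hf2 (norm_nonneg _))
    have h3 : |g₂ p₂| ≤ M * ‖p₂‖ :=
      (sp_abs_apply_le g₂ p₂).trans (mul_le_mul_of_nonneg_right hg2 (norm_nonneg _))
    have h4 : M * ‖p₂‖ ≤ M * ((M + H * ‖v₂‖) / β₀) :=
      mul_le_mul_of_nonneg_left hp2b (le_of_lt hM)
    have h5 : M * ((M + H * ‖v₂‖) / β₀) =
        (H / β₀) * M * ‖v₂‖ + (1 / β₀) * M ^ 2 := by
      field_simp; ring
    have h6 := abs_le.mp h3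
    have h7 : (1 + H / β₀) * M * ‖v₂‖ = M * ‖v₂‖ + (H / β₀) * M * ‖v₂‖ := by ring
    linarith
  have hv2M : ‖v₂‖ ≤ Cv * M := by
    rw [hCv_def]
    exact sp_quad α₀ (1 + H / β₀) (1 / β₀) ‖v₂‖ M hα (norm_nonneg _) (le_of_lt hM) hst
  have hp2M : ‖p₂‖ ≤ Cp * M := by
    have h2 : Cp * M = (M + H * (Cv * M)) / β₀ := by
      rw [hCp_def]; field_simp
    have h1 : (M + H * ‖v₂‖) / β₀ ≤ (M + H * (Cv * M)) / β₀ := by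
      gcongr
    rw [h2]; exact hp2b.trans h1
  -- abbreviations for the differences
  set x : ℝ := ‖v₁ - v₂‖ with hx_def
  set y : ℝ := ‖p₁ - p₂‖ with hy_def
  set da : ℝ := ‖a₁ - a₂‖ with hda_def
  set db : ℝ := ‖b₁ - b₂‖ with hdb_def
  set df : ℝ := ‖f₁ - f₂‖ with hdf_def
  set dg : ℝ := ‖g₁ - g₂‖ with hdg_def
  have hx0 : 0 ≤ x := by rw [hx_def]; exact norm_nonneg (v₁ - v₂)
  have hy0 : 0 ≤ y := by rw [hy_def]; exact norm_nonneg (p₁ - p₂)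
  have hda0 : 0 ≤ da := by rw [hda_def]; exact norm_nonneg (a₁ - a₂)
  have hdb0 : 0 ≤ db := by rw [hdb_def]; exact norm_nonneg (b₁ - b₂)
  have hdf0 : 0 ≤ df := by rw [hdf_def]; exact norm_nonneg (f₁ - f₂)
  have hdg0 : 0 ≤ dg := by rw [hdg_def]; exact norm_nonneg (g₁ - g₂)
  set D : ℝ := M * (da + db) + df + dg with hD_def
  have hD0 : 0 ≤ D := by
    rw [hD_def]
    have : 0 ≤ M * (da + db) := mul_nonneg (le_of_lt hM) (by linarith)
    linarith
  -- the two difference identities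
  have E1 : a₁ (v₁ - v₂) + b₁ (p₁ - p₂) =
      (f₁ - f₂) - ((a₁ - a₂) v₂ + (b₁ - b₂) p₂) := by
    simp only [map_sub, ContinuousLinearMap.sub_apply]
    rw [← heq1, ← heq2]; abel
  have E2 : ∀ q : Q, b₁ q (v₁ - v₂) = (g₁ - g₂) q - (b₁ - b₂) q v₂ := by
    intro q
    simp only [map_sub, ContinuousLinearMap.sub_apply]
    rw [hq1 q]
    have := hq2 q
    linarith
  clear_value x y da db df dg D
  -- bounds on the perturbation terms
  have hav2 : ‖(a₁ - a₂) v₂‖ ≤ da * (Cv * M) := by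
    rw [hda_def]
    exact ((a₁ - a₂).le_opNorm v₂).trans
      (mul_le_mul_of_nonneg_left hv2M (norm_nonneg (a₁ - a₂)))
  have hbp2 : ‖(b₁ - b₂) p₂‖ ≤ db * (Cp * M) := by
    rw [hdb_def]
    exact ((b₁ - b₂).le_opNorm p₂).trans
      (mul_le_mul_of_nonneg_left hp2M (norm_nonneg (b₁ - b₂)))
  -- inf-sup bound for y
  have hy1 : β₀ * y ≤ df + H * x + da * (Cv * M) + db * (Cp * M) := by
    have h1 := hb1 (p₁ - p₂)
    rw [← hy_def] at h1
    have h2 : b₁ (p₁ - p₂) =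
        ((f₁ - f₂) - ((a₁ - a₂) v₂ + (b₁ - b₂) p₂)) - a₁ (v₁ - v₂) :=
      eq_sub_of_add_eq' E1
    rw [h2] at h1
    have t1 := norm_sub_le ((f₁ - f₂) - ((a₁ - a₂) v₂ + (b₁ - b₂) p₂)) (a₁ (v₁ - v₂))
    have t2 := norm_sub_le (f₁ - f₂) ((a₁ - a₂) v₂ + (b₁ - b₂) p₂)
    have t3 := norm_add_le ((a₁ - a₂) v₂) ((b₁ - b₂) p₂)
    have n2 : ‖a₁ (v₁ - v₂)‖ ≤ H * x := by
      rw [hx_def]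
      exact (a₁.le_opNorm _).trans (mul_le_mul_of_nonneg_right ha1H (norm_nonneg _))
    have n3 : ‖f₁ - f₂‖ = df := hdf_def.symm
    linarith [hav2, hbp2]
  -- coercivity estimate
  have key : α₀ * x ^ 2 ≤
      df * x + dg * y + db * y * (Cv * M) + da * (Cv * M) * x + db * (Cp * M) * x := by
    have hc := hc1 (v₁ - v₂)
    rw [← hx_def] at hc
    have h1 := congrArg (fun F => F (v₁ - v₂)) E1
    simp only [ContinuousLinearMap.add_apply, ContinuousLinearMap.sub_apply] at h1
    have h2 := E2 (p₁ - p₂)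
    have h3 : a₁ (v₁ - v₂) (v₁ - v₂) =
        (f₁ - f₂) (v₁ - v₂) - ((g₁ - g₂) (p₁ - p₂) - (b₁ - b₂) (p₁ - p₂) v₂)
          - ((a₁ - a₂) v₂ (v₁ - v₂) + (b₁ - b₂) p₂ (v₁ - v₂)) := by
      simp only [ContinuousLinearMap.sub_apply] at h2 ⊢
      linarith
    rw [h3] at hc
    have t1 : |(f₁ - f₂) (v₁ - v₂)| ≤ df * x := by
      rw [hdf_def, hx_def]; exact sp_abs_apply_le _ _
    have t2 : |(g₁ - g₂) (p₁ - p₂)| ≤ dg * y := by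
      rw [hdg_def, hy_def]; exact sp_abs_apply_le _ _
    have t3 : |(b₁ - b₂) (p₁ - p₂) v₂| ≤ db * y * (Cv * M) := by
      rw [hdb_def, hy_def]
      exact (sp_abs_apply₂_le _ _ _).trans
        (mul_le_mul_of_nonneg_left hv2M (by positivity))
    have t4 : |(a₁ - a₂) v₂ (v₁ - v₂)| ≤ da * (Cv * M) * x := by
      rw [hda_def, hx_def]
      exact (sp_abs_apply₂_le _ _ _).trans
        (mul_le_mul_of_nonneg_right
          (mul_le_mul_of_nonneg_left hv2M (norm_nonneg (a₁ - a₂))) (norm_nonneg (v₁ - v₂)))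
    have t5 : |(b₁ - b₂) p₂ (v₁ - v₂)| ≤ db * (Cp * M) * x := by
      rw [hdb_def, hx_def]
      exact (sp_abs_apply₂_le _ _ _).trans
        (mul_le_mul_of_nonneg_right
          (mul_le_mul_of_nonneg_left hp2M (norm_nonneg (b₁ - b₂))) (norm_nonneg (v₁ - v₂)))
    have u1 := abs_le.mp t1
    have u2 := abs_le.mp t2
    have u3 := abs_le.mp t3
    have u4 := abs_le.mp t4
    have u5 := abs_le.mp t5
    linarith
  -- grouping via C₁
  have grp1 : df + da * (Cv * M) + db * (Cp * M) ≤ C₁ * D := by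
    rw [hD_def]
    linarith [mul_nonneg (mul_nonneg (sub_nonneg.mpr hC₁v) (le_of_lt hM)) hda0,
      mul_nonneg (mul_nonneg (sub_nonneg.mpr hC₁p) (le_of_lt hM)) hdb0,
      mul_nonneg (sub_nonneg.mpr hC₁1) hdf0, mul_nonneg (le_of_lt hC₁0) hdg0]
  have grp2 : dg + db * (Cv * M) ≤ C₁ * D := by
    rw [hD_def]
    linarith [mul_nonneg (mul_nonneg (sub_nonneg.mpr hC₁v) (le_of_lt hM)) hdb0,
      mul_nonneg (sub_nonneg.mpr hC₁1) hdg0, mul_nonneg (le_of_lt hC₁0) hdf0,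
      mul_nonneg (mul_nonneg (le_of_lt hC₁0) (le_of_lt hM)) hda0]
  have hyD : y ≤ (C₁ * D + H * x) / β₀ := by
    rw [le_div_iff₀ hβ]
    linarith [hy1, grp1]
  have key2 : α₀ * x ^ 2 ≤ A * D * x + B * D ^ 2 := by
    have k1 : α₀ * x ^ 2 ≤ C₁ * D * x + C₁ * D * y := by
      have m1 : (df + da * (Cv * M) + db * (Cp * M)) * x ≤ C₁ * D * x :=
        mul_le_mul_of_nonneg_right grp1 hx0
      have m2 : (dg + db * (Cv * M)) * y ≤ C₁ * D * y :=
        mul_le_mul_of_nonneg_right grp2 hy0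
      linarith [key, m1, m2]
    have k2 : C₁ * D * y ≤ C₁ * D * ((C₁ * D + H * x) / β₀) :=
      mul_le_mul_of_nonneg_left hyD (mul_nonneg (le_of_lt hC₁0) hD0)
    have k3 : C₁ * D * x + C₁ * D * ((C₁ * D + H * x) / β₀) =
        A * D * x + B * D ^ 2 := by
      rw [hA_def, hB_def]; field_simp; ring
    linarith
  have hxD : x ≤ C₅ * D := by
    rw [hC₅_def]
    exact sp_quad α₀ A B x D hα hx0 hD0 key2
  have hyD2 : y ≤ (C₁ + H * C₅) / β₀ * D := by
    have h1 : (C₁ * D + H * x) / β₀ ≤ (C₁ * D + H * (C₅ * D)) / β₀ := by gcongr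
    have h2 : (C₁ * D + H * (C₅ * D)) / β₀ = (C₁ + H * C₅) / β₀ * D := by
      field_simp
    linarith [hyD.trans h1, h2.le]
  calc x + y ≤ C₅ * D + (C₁ + H * C₅) / β₀ * D := by linarith
    _ = (C₅ + (C₁ + H * C₅) / β₀) * D := by ring
end
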